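/- Let 0 < α < 1, 1 < β ≤ 2, μ_α ≥ 0 and μ_β < 0, and let m ≥ 2. Then, with D = μ_α(A + Aᵀ) + μ_β(B + Bᵀ), the matrix I + D is invertible and, in the spectral norm, ‖(I + D)^{-1}‖ ≤ 1 and ‖(I + D)^{-1}(I - D)‖ ≤ 1. -/

import Mathlib

/-- Grünwald–Letnikov coefficients: `g γ 0 = 1`, `g γ k = (1 - (γ+1)/k) * g γ (k-1)`. -/
noncomputable def g (γ : ℝ) : ℕ → ℝ
  | 0 => 1
  | k + 1 => (1 - (γ + 1) / ((k : ℝ) + 1)) * g γ k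

/-- WSGD coefficients: `w γ 0 = (γ/2) g γ 0`, `w γ k = (γ/2) g γ k + ((2-γ)/2) g γ (k-1)`. -/
noncomputable def w (γ : ℝ) : ℕ → ℝ
  | 0 => γ / 2 * g γ 0
  | k + 1 => γ / 2 * g γ (k + 1) + (2 - γ) / 2 * g γ k

/-- The `(m-1) × (m-1)` lower-Hessenberg Toeplitz matrix with entries
`w_{i-j+1}^{(γ)}` for `j ≤ i+1` (1-based indices) and `0` otherwise. -/
noncomputable def wsgdMatrix (γ : ℝ) (m : ℕ) : Matrix (Fin (m - 1)) (Fin (m - 1)) ℝ :=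
  fun i j => if (j : ℕ) ≤ (i : ℕ) + 1 then w γ ((i : ℕ) + 1 - (j : ℕ)) else 0

/-- The Crank–Nicolson matrix `D = μ_α (A + Aᵀ) + μ_β (B + Bᵀ)`. -/
noncomputable def matD (α β μα μβ : ℝ) (m : ℕ) : Matrix (Fin (m - 1)) (Fin (m - 1)) ℝ :=
  μα • (wsgdMatrix α m + Matrix.transpose (wsgdMatrix α m)) + μβ • (wsgdMatrix β m + Matrix.transpose (wsgdMatrix β m))

/-!
The matrix `D` is positive semidefinite. Indeed `A + Aᵀ` and `-(B + Bᵀ)` are symmetric Toeplitz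
matrices with entry `2 v₁` on the diagonal and non-positive entries off it (`v = w^{(α)}`,
resp. `v = -w^{(β)}`), and the off-diagonal entries of a half row sum to
`v₁ - (v₀ + ⋯ + v_{N+1}) ≤ v₁`, since the partial sums of the WSGD coefficients are
`γ/2 g_{N+1}^{(γ-1)} + (2-γ)/2 g_N^{(γ-1)}`, which have a sign. Diagonal dominance and Gershgorin's
theorem make the eigenvalues non-negative. For positive `D` and `y = u + D u`,
`‖y‖² = ‖u‖² + 2⟪u, D u⟫ + ‖D u‖²` dominates both `‖u‖²` and `‖u - D u‖²`, which bounds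
`(I + D)⁻¹ y = u` and `(I + D)⁻¹ (I - D) y = u - D u`.
-/

open Finset
open scoped Matrix InnerProductSpace ComplexOrder

section Accretive

variable {𝕜 E : Type*} [RCLike 𝕜] [NormedAddCommGroup E] [InnerProductSpace 𝕜 E]

theorem norm_le_norm_add_of_re_inner_nonneg {x y : E} (h : 0 ≤ RCLike.re ⟪x, y⟫_𝕜) :
    ‖x‖ ≤ ‖x + y‖ := by
  refine (sq_le_sq₀ (norm_nonneg _) (norm_nonneg _)).1 ?_
  rw [@norm_add_sq 𝕜]
  nlinarith [sq_nonneg ‖y‖]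

theorem norm_sub_le_norm_add_of_re_inner_nonneg {x y : E} (h : 0 ≤ RCLike.re ⟪x, y⟫_𝕜) :
    ‖x - y‖ ≤ ‖x + y‖ := by
  refine (sq_le_sq₀ (norm_nonneg _) (norm_nonneg _)).1 ?_
  rw [@norm_add_sq 𝕜, @norm_sub_sq 𝕜]
  linarith

namespace ContinuousLinearMap

variable {R T : E →L[𝕜] E} (hT : ∀ u, 0 ≤ RCLike.re ⟪u, T u⟫_𝕜)
include hT

theorem norm_le_one_of_one_add_mul_eq_one (h : (1 + T) * R = 1) : ‖R‖ ≤ 1 := by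
  refine opNorm_le_bound _ zero_le_one fun y ↦ ?_
  have hy : R y + T (R y) = y := by simpa using congr($h y)
  calc ‖R y‖ ≤ ‖R y + T (R y)‖ := norm_le_norm_add_of_re_inner_nonneg (hT _)
    _ = 1 * ‖y‖ := by rw [hy, one_mul]

theorem norm_mul_one_sub_le_one (h₁ : R * (1 + T) = 1) (h₂ : (1 + T) * R = 1) :
    ‖R * (1 - T)‖ ≤ 1 := by
  refine opNorm_le_bound _ zero_le_one fun y ↦ ?_
  have hy : R y + T (R y) = y := by simpa using congr($h₂ y)
  have hcomm : R * (1 - T) = (1 - T) * R :=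
    calc R * (1 - T) = R * (1 - T) * ((1 + T) * R) := by rw [h₂, mul_one]
      _ = R * (1 + T) * ((1 - T) * R) := by noncomm_ring
      _ = (1 - T) * R := by rw [h₁, one_mul]
  have hcayley : (R * (1 - T)) y = R y - T (R y) := by rw [hcomm]; rfl
  calc ‖(R * (1 - T)) y‖ = ‖R y - T (R y)‖ := by rw [hcayley]
    _ ≤ ‖R y + T (R y)‖ := norm_sub_le_norm_add_of_re_inner_nonneg (hT _)
    _ = 1 * ‖y‖ := by rw [hy, one_mul]

end ContinuousLinearMap
end Accretive

namespace Matrix.PosSemidef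

variable {𝕜 n : Type*} [RCLike 𝕜] [Fintype n] [DecidableEq n] {D : Matrix n n 𝕜}
  (hD : D.PosSemidef)
include hD

theorem isUnit_one_add : IsUnit (1 + D) := (PosDef.one.add_posSemidef hD).isUnit

theorem re_inner_toEuclideanCLM_nonneg (u : EuclideanSpace 𝕜 n) :
    0 ≤ RCLike.re ⟪u, toEuclideanCLM (n := n) (𝕜 := 𝕜) D u⟫_𝕜 :=
  (isPositive_toEuclideanLin_iff.2 hD).re_inner_nonneg_right u

theorem toEuclideanCLM_one_add_mul_inv :
    toEuclideanCLM (n := n) (𝕜 := 𝕜) (1 + D) *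
      toEuclideanCLM (n := n) (𝕜 := 𝕜) (1 + D)⁻¹ = 1 := by
  rw [← map_mul, mul_nonsing_inv _ ((isUnit_iff_isUnit_det _).1 hD.isUnit_one_add), map_one]

theorem toEuclideanCLM_inv_mul_one_add :
    toEuclideanCLM (n := n) (𝕜 := 𝕜) (1 + D)⁻¹ *
      toEuclideanCLM (n := n) (𝕜 := 𝕜) (1 + D) = 1 := by
  rw [← map_mul, nonsing_inv_mul _ ((isUnit_iff_isUnit_det _).1 hD.isUnit_one_add), map_one]

theorem norm_toEuclideanCLM_inv_one_add_le_one :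
    ‖toEuclideanCLM (n := n) (𝕜 := 𝕜) (1 + D)⁻¹‖ ≤ 1 := by
  refine ContinuousLinearMap.norm_le_one_of_one_add_mul_eq_one hD.re_inner_toEuclideanCLM_nonneg ?_
  simpa using hD.toEuclideanCLM_one_add_mul_inv

theorem norm_toEuclideanCLM_inv_one_add_mul_one_sub_le_one :
    ‖toEuclideanCLM (n := n) (𝕜 := 𝕜) ((1 + D)⁻¹ * (1 - D))‖ ≤ 1 := by
  rw [map_mul, map_sub, map_one]
  refine ContinuousLinearMap.norm_mul_one_sub_le_one hD.re_inner_toEuclideanCLM_nonneg ?_ ?_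
  · simpa using hD.toEuclideanCLM_inv_mul_one_add
  · simpa using hD.toEuclideanCLM_one_add_mul_inv

end Matrix.PosSemidef

theorem Matrix.IsHermitian.posSemidef_of_sum_abs_le_diag {n : Type*} [Fintype n] [DecidableEq n]
    {A : Matrix n n ℝ} (hA : A.IsHermitian) (h : ∀ i, ∑ j ∈ univ.erase i, |A i j| ≤ A i i) :
    A.PosSemidef := by
  refine hA.posSemidef_iff_eigenvalues_nonneg.2 fun i ↦ ?_
  have hμ : Module.End.HasEigenvalue (toLin' A) (hA.eigenvalues i) := by
    rw [Module.End.hasEigenvalue_iff_mem_spectrum, spectrum_toLin']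
    exact hA.eigenvalues_mem_spectrum_real i
  obtain ⟨k, hk⟩ := eigenvalue_mem_ball hμ
  rw [Metric.mem_closedBall, Real.dist_eq] at hk
  simp only [Real.norm_eq_abs] at hk
  rw [Pi.zero_apply]
  linarith [h k, neg_abs_le (hA.eigenvalues i - A k k)]

section Toeplitz

/-- `wsgdMatrix γ m` is `hessenbergToeplitz (w γ) (m - 1)`. -/
def hessenbergToeplitz (v : ℕ → ℝ) (n : ℕ) : Matrix (Fin n) (Fin n) ℝ :=
  fun i j ↦ if (j : ℕ) ≤ i + 1 then v (i + 1 - j) else 0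

/-- The entry of `H + Hᵀ` at distance `d` from the diagonal, `H = hessenbergToeplitz v n`. -/
def symmetrizedSymbol (v : ℕ → ℝ) (d : ℕ) : ℝ :=
  v (d + 1) + if d ≤ 1 then v (1 - d) else 0

theorem hessenbergToeplitz_add_transpose_apply (v : ℕ → ℝ) {n : ℕ} (i j : Fin n) :
    (hessenbergToeplitz v n + (hessenbergToeplitz v n)ᵀ) i j
      = symmetrizedSymbol v (Nat.dist i j) := by
  simp only [Matrix.add_apply, Matrix.transpose_apply, hessenbergToeplitz, symmetrizedSymbol]
  rcases le_total (i : ℕ) j with h | h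
  · obtain ⟨d, hd⟩ := Nat.exists_eq_add_of_le h
    rw [hd, Nat.dist_eq_sub_of_le (by omega), if_pos (by omega : (i : ℕ) ≤ i + d + 1), add_comm]
    congr 1
    · congr 1; omega
    · refine if_congr (by omega) (congrArg v (by omega)) rfl
  · obtain ⟨d, hd⟩ := Nat.exists_eq_add_of_le h
    rw [hd, Nat.dist_eq_sub_of_le_right (by omega), if_pos (by omega : (j : ℕ) ≤ j + d + 1)]
    congr 1
    · congr 1; omega
    · refine if_congr (by omega) (congrArg v (by omega)) rfl

theorem hessenbergToeplitz_neg (v : ℕ → ℝ) (n : ℕ) :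
    hessenbergToeplitz (-v) n = -hessenbergToeplitz v n := by
  ext i j
  simp only [hessenbergToeplitz, Pi.neg_apply, Matrix.neg_apply]
  split_ifs <;> simp

variable {v : ℕ → ℝ} (h02 : v 0 + v 2 ≤ 0) (hv : ∀ k, 3 ≤ k → v k ≤ 0)
  (hsum : ∀ n, 0 ≤ ∑ k ∈ range (n + 3), v k)

theorem sum_range_symmetrizedSymbol (N : ℕ) :
    ∑ d ∈ range (N + 1), symmetrizedSymbol v (d + 1) = ∑ k ∈ range (N + 3), v k - v 1 := by
  induction N with
  | zero => simp [symmetrizedSymbol, sum_range_succ]; ring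
  | succ N ih =>
    rw [sum_range_succ, ih, sum_range_succ _ (N + 3), symmetrizedSymbol, if_neg (by omega)]
    ring

include h02 hv in
theorem symmetrizedSymbol_nonpos {d : ℕ} (hd : 1 ≤ d) : symmetrizedSymbol v d ≤ 0 := by
  rcases hd.eq_or_lt with rfl | hd
  · simpa [symmetrizedSymbol, add_comm] using h02
  · simpa [symmetrizedSymbol, show ¬ d ≤ 1 by omega] using hv (d + 1) (by omega)

include h02 hv hsum in
theorem sum_range_abs_symmetrizedSymbol_le (N : ℕ) :
    ∑ d ∈ range N, |symmetrizedSymbol v (d + 1)| ≤ v 1 := by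
  have hv1 : 0 ≤ v 1 := by
    have := hsum 0
    simp only [sum_range_succ, sum_range_zero] at this
    linarith
  rcases N with _ | N
  · simpa using hv1
  rw [sum_congr rfl fun d _ ↦ abs_of_nonpos (symmetrizedSymbol_nonpos h02 hv (by omega)),
    sum_neg_distrib, sum_range_symmetrizedSymbol]
  linarith [hsum N]

include h02 hv hsum in
theorem sum_erase_abs_symmetrizedSymbol_dist_le {n : ℕ} (i : Fin n) :
    ∑ j ∈ univ.erase i, |symmetrizedSymbol v (Nat.dist i j)| ≤ 2 * v 1 := by
  set F : ℕ → ℝ := fun j ↦ |symmetrizedSymbol v (Nat.dist i j)|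
  have hsplit : ∑ j ∈ univ.erase i, F j
      = ∑ j ∈ range (i : ℕ), F j + ∑ j ∈ Ico ((i : ℕ) + 1) n, F j := by
    rw [sum_erase_eq_sub (mem_univ i), Fin.sum_univ_eq_sum_range F n,
      ← sum_range_add_sum_Ico F i.isLt, sum_range_succ]
    ring
  have hleft : ∑ j ∈ range (i : ℕ), F j = ∑ d ∈ range (i : ℕ), |symmetrizedSymbol v (d + 1)| := by
    rw [← sum_range_reflect]
    refine sum_congr rfl fun j hj ↦ ?_
    rw [mem_range] at hj
    simp only [F]
    rw [Nat.dist_eq_sub_of_le_right (by omega)]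
    congr 3; omega
  have hright : ∑ j ∈ Ico ((i : ℕ) + 1) n, F j
      = ∑ d ∈ range (n - ((i : ℕ) + 1)), |symmetrizedSymbol v (d + 1)| := by
    rw [sum_Ico_eq_sum_range]
    refine sum_congr rfl fun d _ ↦ ?_
    simp only [F]
    rw [Nat.dist_eq_sub_of_le (by omega)]
    congr 3; omega
  rw [hsplit, hleft, hright, two_mul]
  exact add_le_add (sum_range_abs_symmetrizedSymbol_le h02 hv hsum _)
    (sum_range_abs_symmetrizedSymbol_le h02 hv hsum _)

include h02 hv hsum in
theorem posSemidef_hessenbergToeplitz_add_transpose (n : ℕ) :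
    (hessenbergToeplitz v n + (hessenbergToeplitz v n)ᵀ).PosSemidef := by
  refine Matrix.IsHermitian.posSemidef_of_sum_abs_le_diag ?_ fun i ↦ ?_
  · exact Matrix.isHermitian_iff_isSymm.2 (Matrix.isSymm_add_transpose_self _)
  · simp only [hessenbergToeplitz_add_transpose_apply, Nat.dist_self]
    simpa [symmetrizedSymbol, two_mul] using sum_erase_abs_symmetrizedSymbol_dist_le h02 hv hsum i

end Toeplitz

section Coefficients

theorem g_succ (γ : ℝ) (k : ℕ) : g γ (k + 1) = (1 - (γ + 1) / ((k : ℝ) + 1)) * g γ k := rfl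

theorem g_one (γ : ℝ) : g γ 1 = -γ := by simp [g]

theorem g_two (γ : ℝ) : g γ 2 = γ * (γ - 1) / 2 := by
  rw [g_succ, g_one]; push_cast; ring

theorem succ_mul_g_succ (γ : ℝ) (n : ℕ) : ((n : ℝ) + 1) * g γ (n + 1) = -γ * g (γ - 1) n := by
  induction n with
  | zero => simp [g]
  | succ n ih =>
    rw [g_succ γ (n + 1), g_succ (γ - 1) n]
    push_cast at ih ⊢
    field_simp at ih ⊢
    linear_combination ((n : ℝ) + 1 - γ) * ih

theorem g_sub_one_succ (γ : ℝ) (n : ℕ) : g (γ - 1) (n + 1) = g (γ - 1) n + g γ (n + 1) := by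
  have h := succ_mul_g_succ γ n
  rw [g_succ]
  field_simp at h ⊢
  linear_combination -h

theorem g_succ_factor_nonneg {γ : ℝ} {k : ℕ} (hk : γ ≤ k) : 0 ≤ 1 - (γ + 1) / ((k : ℝ) + 1) := by
  rw [sub_nonneg, div_le_one (by positivity)]; linarith

theorem g_nonneg_of_nonneg_of_le {γ : ℝ} {j : ℕ} (hj : γ ≤ j) (h : 0 ≤ g γ j) {k : ℕ} (hk : j ≤ k) :
    0 ≤ g γ k := by
  induction k, hk using Nat.le_induction with
  | base => exact h
  | succ k hjk ih =>
    exact mul_nonneg (g_succ_factor_nonneg (hj.trans (by exact_mod_cast hjk))) ih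

theorem g_nonpos_of_nonpos_of_le {γ : ℝ} {j : ℕ} (hj : γ ≤ j) (h : g γ j ≤ 0) {k : ℕ} (hk : j ≤ k) :
    g γ k ≤ 0 := by
  induction k, hk using Nat.le_induction with
  | base => exact h
  | succ k hjk ih =>
    exact mul_nonpos_of_nonneg_of_nonpos
      (g_succ_factor_nonneg (hj.trans (by exact_mod_cast hjk))) ih

theorem w_zero_add_w_two (γ : ℝ) : w γ 0 + w γ 2 = γ * (γ + 2) * (γ - 1) / 4 := by
  simp [w, g]; ring

theorem sum_range_w (γ : ℝ) (n : ℕ) :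
    ∑ k ∈ range (n + 2), w γ k = γ / 2 * g (γ - 1) (n + 1) + (2 - γ) / 2 * g (γ - 1) n := by
  induction n with
  | zero => simp [sum_range_succ, w, g]; ring
  | succ n ih =>
    rw [sum_range_succ, ih, w, g_sub_one_succ γ (n + 1), g_sub_one_succ γ n]
    ring

end Coefficients

section Weights

theorem w_nonpos {α : ℝ} (hα0 : 0 ≤ α) (hα1 : α ≤ 1) {k : ℕ} (hk : 3 ≤ k) : w α k ≤ 0 := by
  obtain ⟨k, rfl⟩ := Nat.exists_eq_add_of_le' hk
  have hg : ∀ j, 1 ≤ j → g α j ≤ 0 := fun j ↦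
    g_nonpos_of_nonpos_of_le (by simpa using hα1) (by rw [g_one]; linarith)
  rw [w]
  nlinarith [hg (k + 2 + 1) (by omega), hg (k + 2) (by omega)]

theorem sum_range_w_nonneg {α : ℝ} (hα0 : 0 ≤ α) (hα1 : α ≤ 1) (n : ℕ) :
    0 ≤ ∑ k ∈ range (n + 3), w α k := by
  have hg : ∀ j, 0 ≤ g (α - 1) j := fun j ↦
    g_nonneg_of_nonneg_of_le (j := 0) (by simpa using hα1) zero_le_one (Nat.zero_le j)
  rw [sum_range_w]
  nlinarith [hg (n + 2), hg (n + 1)]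

theorem w_nonneg {β : ℝ} (hβ1 : 1 ≤ β) (hβ2 : β ≤ 2) {k : ℕ} (hk : 3 ≤ k) : 0 ≤ w β k := by
  obtain ⟨k, rfl⟩ := Nat.exists_eq_add_of_le' hk
  have hg : ∀ j, 2 ≤ j → 0 ≤ g β j := fun j ↦
    g_nonneg_of_nonneg_of_le (by simpa using hβ2) (by rw [g_two]; nlinarith)
  rw [w]
  nlinarith [hg (k + 2 + 1) (by omega), hg (k + 2) (by omega)]

theorem sum_range_w_nonpos {β : ℝ} (hβ1 : 1 ≤ β) (hβ2 : β ≤ 2) (n : ℕ) :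
    ∑ k ∈ range (n + 3), w β k ≤ 0 := by
  have hg : ∀ j, 1 ≤ j → g (β - 1) j ≤ 0 := fun j ↦
    g_nonpos_of_nonpos_of_le (by push_cast; linarith) (by rw [g_one]; linarith)
  rw [sum_range_w]
  nlinarith [hg (n + 2) (by omega), hg (n + 1) (by omega)]

end Weights

theorem matD_eq (α β μα μβ : ℝ) (m : ℕ) :
    matD α β μα μβ m
      = μα • (hessenbergToeplitz (w α) (m - 1) + (hessenbergToeplitz (w α) (m - 1))ᵀ)
      + (-μβ) • (hessenbergToeplitz (-w β) (m - 1) + (hessenbergToeplitz (-w β) (m - 1))ᵀ) := by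
  rw [hessenbergToeplitz_neg, Matrix.transpose_neg, ← neg_add, neg_smul_neg]
  rfl

theorem posSemidef_matD {α β μα μβ : ℝ} (hα0 : 0 ≤ α) (hα1 : α ≤ 1) (hβ1 : 1 ≤ β) (hβ2 : β ≤ 2)
    (hμα : 0 ≤ μα) (hμβ : μβ ≤ 0) (m : ℕ) : (matD α β μα μβ m).PosSemidef := by
  rw [matD_eq]
  refine .add (.smul (posSemidef_hessenbergToeplitz_add_transpose ?_ ?_ ?_ _) hμα)
    (.smul (posSemidef_hessenbergToeplitz_add_transpose ?_ ?_ ?_ _) (neg_nonneg.2 hμβ))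
  · rw [w_zero_add_w_two]
    have : 0 ≤ α * (α + 2) := by positivity
    nlinarith
  · exact fun k hk ↦ w_nonpos hα0 hα1 hk
  · exact sum_range_w_nonneg hα0 hα1
  · rw [Pi.neg_apply, Pi.neg_apply, ← neg_add, w_zero_add_w_two, neg_nonpos]
    have : 0 ≤ β * (β + 2) := by positivity
    nlinarith
  · exact fun k hk ↦ neg_nonpos.2 (w_nonneg hβ1 hβ2 hk)
  · simpa using sum_range_w_nonpos hβ1 hβ2

theorem stmt_18_general (α β μα μβ : ℝ) (hα0 : 0 < α) (hα1 : α < 1) (hβ1 : 1 < β) (hβ2 : β ≤ 2)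
    (hμα : 0 ≤ μα) (hμβ : μβ < 0) (m : ℕ) :
    IsUnit (1 + matD α β μα μβ m) ∧
    ‖Matrix.toEuclideanCLM (𝕜 := ℝ) (n := Fin (m - 1)) ((1 + matD α β μα μβ m)⁻¹)‖ ≤ 1 ∧
    ‖Matrix.toEuclideanCLM (𝕜 := ℝ) (n := Fin (m - 1))
        ((1 + matD α β μα μβ m)⁻¹ * (1 - matD α β μα μβ m))‖ ≤ 1 := by
  have hD := posSemidef_matD hα0.le hα1.le hβ1.le hβ2 hμα hμβ.le m
  exact ⟨hD.isUnit_one_add, hD.norm_toEuclideanCLM_inv_one_add_le_one,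
    hD.norm_toEuclideanCLM_inv_one_add_mul_one_sub_le_one⟩

theorem stmt_18 (α β μα μβ : ℝ) (hα0 : 0 < α) (hα1 : α < 1) (hβ1 : 1 < β) (hβ2 : β ≤ 2)
    (hμα : 0 ≤ μα) (hμβ : μβ < 0) (m : ℕ) (hm : 2 ≤ m) :
    IsUnit (1 + matD α β μα μβ m) ∧
    ‖Matrix.toEuclideanCLM (𝕜 := ℝ) (n := Fin (m - 1)) ((1 + matD α β μα μβ m)⁻¹)‖ ≤ 1 ∧
    ‖Matrix.toEuclideanCLM (𝕜 := ℝ) (n := Fin (m - 1))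
        ((1 + matD α β μα μβ m)⁻¹ * (1 - matD α β μα μβ m))‖ ≤ 1 :=
  stmt_18_general α β μα μβ hα0 hα1 hβ1 hβ2 hμα hμβ m
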